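/- arXiv:1611.09174 — 3 statements merged into one kernel-verified Lean document; each statement's English description precedes it below -/
import Mathlib

section
/- Let n ∈ ℕ and let α, β : ℝ → ℝ be additive functions with α(x) + β(x) = x for all x. Then the function f(x) = (α(x))^{n+1} + (β(x))^{n+1} satisfies Δ_{h₁…h_{n+1}} f(x) = (n+1)! · (∏_{i=1}^{n+1} α(hᵢ) + ∏_{i=1}^{n+1} β(hᵢ)) for all x and all h₁, …, h_{n+1} ∈ ℝ. -/
open List Finset

/-- One-step difference operator: `Δ h f x = f (x + h) - f x`. -/
noncomputable def dOp (h : ℝ) (f : ℝ → ℝ) : ℝ → ℝ := fun x => f (x + h) - f x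

/-- Iterated difference operator `Δ_{h₁…hₙ} f`, with
`Δ_{h₁…hₙhₙ₊₁} f = Δ_{h₁…hₙ} (Δ_{hₙ₊₁} f)`. -/
noncomputable def dOps (hs : List ℝ) (f : ℝ → ℝ) : ℝ → ℝ := hs.foldr dOp f

lemma dOps_nil (f : ℝ → ℝ) : dOps [] f = f := rfl

lemma dOps_cons (c : ℝ) (cs : List ℝ) (f : ℝ → ℝ) :
    dOps (c :: cs) f = dOp c (dOps cs f) := rfl

lemma dOps_append_singleton (cs : List ℝ) (c : ℝ) (f : ℝ → ℝ) :
    dOps (cs ++ [c]) f = dOps cs (dOp c f) := by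
  simp [dOps, List.foldr_append]

lemma dOps_add (cs : List ℝ) (f g : ℝ → ℝ) (x : ℝ) :
    dOps cs (fun y => f y + g y) x = dOps cs f x + dOps cs g x := by
  induction cs generalizing x with
  | nil => rfl
  | cons c t ih =>
    simp only [dOps_cons, dOp]
    rw [show dOps t (fun y => f y + g y) = fun x => dOps t f x + dOps t g x from funext fun x => ih x]
    ring

lemma dOps_sum {ι : Type*} (s : Finset ι) (F : ι → ℝ → ℝ) (cs : List ℝ) (x : ℝ) :
    dOps cs (fun y => ∑ i ∈ s, F i y) x = ∑ i ∈ s, dOps cs (F i) x := by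
  induction cs generalizing x with
  | nil => rfl
  | cons c t ih =>
    simp only [dOps_cons, dOp]
    rw [show dOps t (fun y => ∑ i ∈ s, F i y) = fun x => ∑ i ∈ s, dOps t (F i) x
      from funext fun x => ih x]
    rw [← Finset.sum_sub_distrib]

lemma dOps_const_mul (r : ℝ) (cs : List ℝ) (f : ℝ → ℝ) (x : ℝ) :
    dOps cs (fun y => r * f y) x = r * dOps cs f x := by
  induction cs generalizing x with
  | nil => rfl
  | cons c t ih =>
    simp only [dOps_cons, dOp]
    rw [show dOps t (fun y => r * f y) = fun x => r * dOps t f x from funext fun x => ih x]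
    ring

lemma key (cs : List ℝ) : ∀ j : ℕ, j ≤ cs.length → ∀ y : ℝ,
    dOps cs (fun y => y ^ j) y =
      if j = cs.length then (Nat.factorial cs.length : ℝ) * cs.prod else 0 := by
  induction cs using List.reverseRecOn with
  | nil =>
    intro j hj y
    simp only [List.length_nil, Nat.le_zero] at hj
    subst hj
    simp [dOps_nil]
  | append_singleton t c ih =>
    intro j hj y
    rw [dOps_append_singleton]
    match j with
    | 0 =>
      have h0 : dOp c (fun y : ℝ => y ^ 0) = fun y => (0 : ℝ) * y ^ 0 := by
        funext y; simp [dOp]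
      rw [h0, dOps_const_mul]
      simp
    | (m + 1) =>
      have hm : m ≤ t.length := by simpa using hj
      have hexp : dOp c (fun y : ℝ => y ^ (m + 1)) =
          fun y => ∑ i ∈ Finset.range (m + 1),
            (c ^ (m + 1 - i) * ((m + 1).choose i : ℝ)) * y ^ i := by
        funext y
        simp only [dOp]
        rw [add_pow, Finset.sum_range_succ, Nat.choose_self, Nat.sub_self, pow_zero,
          Nat.cast_one, mul_one, mul_one, add_sub_cancel_right]
        exact Finset.sum_congr rfl fun i _ => by ring
      rw [hexp, dOps_sum]
      have hterm : ∀ i ∈ Finset.range (m + 1),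
          dOps t (fun y => (c ^ (m + 1 - i) * ((m + 1).choose i : ℝ)) * y ^ i) y
            = (c ^ (m + 1 - i) * ((m + 1).choose i : ℝ)) *
              (if i = t.length then (Nat.factorial t.length : ℝ) * t.prod else 0) := by
        intro i hi
        rw [dOps_const_mul, ih i (le_trans (Nat.lt_succ_iff.mp (Finset.mem_range.mp hi)) hm) y]
      rw [Finset.sum_congr rfl hterm]
      by_cases hcase : m + 1 = (t ++ [c]).length
      · have hmt : m = t.length := by simpa using hcase
        rw [if_pos hcase, Finset.sum_range_succ]
        have hzero : ∀ i ∈ Finset.range m,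
            (c ^ (m + 1 - i) * ((m + 1).choose i : ℝ)) *
              (if i = t.length then (Nat.factorial t.length : ℝ) * t.prod else 0) = 0 := by
          intro i hi
          have := Finset.mem_range.mp hi
          rw [if_neg (by omega), mul_zero]
        rw [Finset.sum_eq_zero hzero, zero_add, if_pos hmt, ← hcase, ← hmt,
          Nat.add_sub_cancel_left, Nat.choose_succ_self_right]
        simp [Nat.factorial_succ]
        ring
      · rw [if_neg hcase]
        have hlt : m + 1 < (t ++ [c]).length := lt_of_le_of_ne hj hcase
        have hmt : m < t.length := by simpa using hlt
        apply Finset.sum_eq_zero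
        intro i hi
        have : i ≠ t.length := by
          have := Finset.mem_range.mp hi; omega
        rw [if_neg this, mul_zero]

lemma dOps_comp (a : ℝ → ℝ) (ha : ∀ x y, a (x + y) = a x + a y) (g : ℝ → ℝ)
    (hs : List ℝ) (x : ℝ) :
    dOps hs (fun t => g (a t)) x = dOps (hs.map a) g (a x) := by
  induction hs generalizing x with
  | nil => rfl
  | cons c t ih =>
    simp only [dOps_cons, List.map_cons, dOp]
    rw [ih, ih, ha]

lemma additive_piece (n : ℕ) (a : ℝ → ℝ) (ha : ∀ x y, a (x + y) = a x + a y)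
    (h : Fin (n + 1) → ℝ) (x : ℝ) :
    dOps (List.ofFn h) (fun t => (a t) ^ (n + 1)) x
      = (Nat.factorial (n + 1) : ℝ) * ∏ i, a (h i) := by
  rw [dOps_comp a ha (fun y => y ^ (n + 1)) (List.ofFn h) x]
  rw [List.map_ofFn]
  have hlen : (List.ofFn (a ∘ h)).length = n + 1 := by simp
  rw [key (List.ofFn (a ∘ h)) (n + 1) (by simp) (a x), if_pos hlen.symm, hlen]
  rw [List.prod_ofFn]
  rfl

theorem stmt3 (n : ℕ) (α β : ℝ → ℝ)
    (hα : ∀ x y, α (x + y) = α x + α y) (hβ : ∀ x y, β (x + y) = β x + β y)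
    (hid : ∀ x, α x + β x = x) (h : Fin (n + 1) → ℝ) (x : ℝ) :
    dOps (List.ofFn h) (fun t => (α t) ^ (n + 1) + (β t) ^ (n + 1)) x
      = (Nat.factorial (n + 1) : ℝ) * (∏ i, α (h i) + ∏ i, β (h i)) := by
  rw [dOps_add, additive_piece n α hα h x, additive_piece n β hβ h x]
  ring
end

section
/- Let n ∈ ℕ and let α, β : ℝ → ℝ be additive with α + β = id. Then the function f(x) = (α(x))^{n+1} + (β(x))^{n+1} is n-Jensen-convex: for all x ∈ ℝ and h > 0, Δ_hⁿ⁺¹ f(x) ≥ 0 (indeed > 0). -/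
open List Finset

open fwdDiff in
lemma dOps_replicate (h : ℝ) (k : ℕ) (f : ℝ → ℝ) :
    dOps (List.replicate k h) f = (fwdDiff h)^[k] f := by
  induction k generalizing f with
  | zero => rfl
  | succ k ih =>
      rw [List.replicate_succ, Function.iterate_succ_apply']
      show dOp h (dOps (List.replicate k h) f) = _
      rw [ih]
      rfl

open fwdDiff in
lemma fwdDiff_pow_expand (v : ℝ) (m : ℕ) :
    fwdDiff v (fun t : ℝ => t ^ m) =
      fun x => ∑ j ∈ Finset.range m, (m.choose j : ℝ) * v ^ (m - j) * x ^ j := by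
  funext x
  have h1 : (x + v) ^ m = (∑ j ∈ Finset.range m, x ^ j * v ^ (m - j) * (m.choose j : ℝ)) + x ^ m := by
    rw [add_pow x v m, Finset.sum_range_succ]
    simp
  rw [fwdDiff, h1, add_sub_cancel_right]
  exact Finset.sum_congr rfl fun j _ => by ring

open fwdDiff in
lemma fwdDiff_iter_pow_lt (v : ℝ) (m : ℕ) :
    ∀ k, m < k → (fwdDiff v)^[k] (fun t : ℝ => t ^ m) = fun _ => 0 := by
  induction m using Nat.strong_induction_on with
  | _ m ih =>
    intro k hk
    obtain _ | k := k
    · omega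
    rw [Function.iterate_succ_apply, fwdDiff_pow_expand]
    have : (fun x : ℝ => ∑ j ∈ Finset.range m, (m.choose j : ℝ) * v ^ (m - j) * x ^ j)
        = ∑ j ∈ Finset.range m, ((m.choose j : ℝ) * v ^ (m - j)) • (fun t : ℝ => t ^ j) := by
      funext x; simp [smul_eq_mul, mul_assoc]
    rw [this, fwdDiff_iter_finset_sum]
    funext y
    rw [Finset.sum_apply]
    apply Finset.sum_eq_zero
    intro j hj
    have hjm : j < m := Finset.mem_range.mp hj
    rw [fwdDiff_iter_const_smul, ih j hjm k (hjm.trans_le (Nat.lt_succ_iff.mp hk))]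
    simp

open fwdDiff in
lemma fwdDiff_iter_pow_self (v : ℝ) (m : ℕ) :
    (fwdDiff v)^[m] (fun t : ℝ => t ^ m) = fun _ => (m.factorial : ℝ) * v ^ m := by
  induction m with
  | zero => funext y; simp
  | succ m ih =>
    rw [Function.iterate_succ_apply, fwdDiff_pow_expand]
    have : (fun x : ℝ => ∑ j ∈ Finset.range (m + 1), ((m + 1).choose j : ℝ) * v ^ (m + 1 - j) * x ^ j)
        = ∑ j ∈ Finset.range (m + 1), (((m + 1).choose j : ℝ) * v ^ (m + 1 - j)) • (fun t : ℝ => t ^ j) := by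
      funext x; simp [smul_eq_mul, mul_assoc]
    rw [this, fwdDiff_iter_finset_sum]
    funext y
    rw [Finset.sum_apply, Finset.sum_range_succ]
    have h0 : ∑ j ∈ Finset.range m,
        ((fwdDiff v)^[m] ((((m + 1).choose j : ℝ) * v ^ (m + 1 - j)) • fun t : ℝ => t ^ j)) y = 0 := by
      apply Finset.sum_eq_zero
      intro j hj
      rw [fwdDiff_iter_const_smul, fwdDiff_iter_pow_lt v j m (Finset.mem_range.mp hj)]
      simp
    rw [h0, zero_add, fwdDiff_iter_const_smul, ih]
    have h2 : m + 1 - m = 1 := by omega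
    simp only [Pi.smul_apply, smul_eq_mul, Nat.choose_succ_self_right, h2, pow_one]
    rw [Nat.factorial_succ]
    push_cast
    ring

open fwdDiff in
lemma fwdDiff_comp_additive (α : ℝ → ℝ) (hα : ∀ x y, α (x + y) = α x + α y)
    (h : ℝ) (g : ℝ → ℝ) (k : ℕ) (x : ℝ) :
    (fwdDiff h)^[k] (fun t => g (α t)) x = (fwdDiff (α h))^[k] g (α x) := by
  induction k generalizing g with
  | zero => rfl
  | succ k ih =>
    rw [Function.iterate_succ_apply, Function.iterate_succ_apply]
    have : fwdDiff h (fun t => g (α t)) = fun t => (fwdDiff (α h) g) (α t) := by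
      funext t; simp [fwdDiff, hα]
    rw [this, ih]

lemma pow_add_pow_pos (a b : ℝ) (m : ℕ) (hm : 0 < m) (hab : 0 < a + b) :
    0 < a ^ m + b ^ m := by
  rcases Nat.even_or_odd m with he | ho
  · rcases le_total a b with hle | hle
    · have hb : 0 < b := by linarith
      have := he.pow_nonneg (a := a)
      have := pow_pos hb m
      linarith
    · have ha : 0 < a := by linarith
      have := he.pow_nonneg (a := b)
      have := pow_pos ha m
      linarith
  · have h1 : -b < a := by linarith
    have := ho.strictMono_pow (R := ℝ) h1
    simp only [ho.neg_pow] at this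
    linarith

theorem stmt5 (n : ℕ) (α β : ℝ → ℝ)
    (hα : ∀ x y, α (x + y) = α x + α y) (hβ : ∀ x y, β (x + y) = β x + β y)
    (hid : ∀ x, α x + β x = x) (x h : ℝ) (hh : 0 < h) :
    0 < dOps (List.replicate (n + 1) h) (fun t => (α t) ^ (n + 1) + (β t) ^ (n + 1)) x := by
  rw [dOps_replicate]
  have hsplit : (fun t => (α t) ^ (n + 1) + (β t) ^ (n + 1))
      = (fun t => (α t) ^ (n + 1)) + (fun t => (β t) ^ (n + 1)) := rfl
  rw [hsplit, fwdDiff_iter_add, Pi.add_apply]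
  have hA : (fwdDiff h)^[n + 1] (fun t => (α t) ^ (n + 1)) x
      = ((n + 1).factorial : ℝ) * (α h) ^ (n + 1) := by
    rw [fwdDiff_comp_additive α hα h (fun t => t ^ (n + 1)) (n + 1) x,
      fwdDiff_iter_pow_self]
  have hB : (fwdDiff h)^[n + 1] (fun t => (β t) ^ (n + 1)) x
      = ((n + 1).factorial : ℝ) * (β h) ^ (n + 1) := by
    rw [fwdDiff_comp_additive β hβ h (fun t => t ^ (n + 1)) (n + 1) x,
      fwdDiff_iter_pow_self]
  rw [hA, hB, ← mul_add]
  have hfac : (0 : ℝ) < ((n + 1).factorial : ℝ) := by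
    exact_mod_cast (n + 1).factorial_pos
  have hpos : 0 < (α h) ^ (n + 1) + (β h) ^ (n + 1) :=
    pow_add_pow_pos _ _ _ (Nat.succ_pos n) (by rw [hid h]; exact hh)
  positivity
end

section
/- There exists a Jensen-convex function f : ℝ → ℝ that is not Wright-convex; explicitly, f(x) = |a(x)| for any discontinuous additive function a : ℝ → ℝ is Jensen-convex but not Wright-convex. -/
open List Finset

/-- Bundled additive map. -/
noncomputable def auxHom (a : ℝ → ℝ) (hadd : ∀ x y, a (x + y) = a x + a y) : ℝ →+ ℝ where
  toFun := a
  map_zero' := by have := hadd 0 0; simp only [add_zero] at this; linarith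
  map_add' := hadd

lemma aux_linear_of_bounded (a : ℝ → ℝ) (hadd : ∀ x y, a (x + y) = a x + a y)
    (M : ℝ) (hb : ∀ t ∈ Set.Icc (0:ℝ) 1, |a t| ≤ M) : ∀ x, a x = a 1 * x := by
  set φ := auxHom a hadd with hφ
  have hφa : ∀ x, φ x = a x := fun _ => rfl
  have hint : ∀ m : ℤ, a (m : ℝ) = m * a 1 := by
    intro m
    have := map_zsmul φ m (1:ℝ)
    simpa [hφa, zsmul_eq_mul] using this
  have hnat : ∀ (n : ℕ) (x : ℝ), a (n * x) = n * a x := by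
    intro n x
    have := map_nsmul φ n x
    simpa [hφa, nsmul_eq_mul] using this
  intro x
  -- key estimate: for all n ≥ 1, |a x - a 1 * x| ≤ (M + |a 1|) / n
  have key : ∀ n : ℕ, 0 < n → |a x - a 1 * x| ≤ (M + |a 1|) / n := by
    intro n hn
    set m : ℤ := ⌊(n : ℝ) * x⌋ with hm
    have h1 : (0:ℝ) ≤ (n:ℝ) * x - m := by
      have := Int.floor_le ((n:ℝ) * x); linarith
    have h2 : (n:ℝ) * x - m ≤ 1 := by
      have := Int.lt_floor_add_one ((n:ℝ) * x); linarith
    have hsub : a ((n:ℝ) * x - m) = n * a x - m * a 1 := by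
      have := map_sub φ ((n:ℝ) * x) (m : ℝ)
      rw [hφa, hφa, hφa] at this
      rw [this, hnat, hint]
    have hbd : |(n:ℝ) * a x - m * a 1| ≤ M := by
      rw [← hsub]; exact hb _ ⟨h1, h2⟩
    have hmd : |(m:ℝ) * a 1 - (n:ℝ) * x * a 1| ≤ |a 1| := by
      rw [← sub_mul, abs_mul]
      calc |(m:ℝ) - (n:ℝ) * x| * |a 1| ≤ 1 * |a 1| := by
            apply mul_le_mul_of_nonneg_right _ (abs_nonneg _)
            rw [abs_sub_comm, abs_le]; constructor <;> linarith
        _ = |a 1| := one_mul _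
    have hfull : |(n:ℝ) * a x - (n:ℝ) * x * a 1| ≤ M + |a 1| := by
      calc |(n:ℝ) * a x - (n:ℝ) * x * a 1|
          ≤ |(n:ℝ) * a x - m * a 1| + |(m:ℝ) * a 1 - (n:ℝ) * x * a 1| := by
            have := abs_sub_le ((n:ℝ) * a x) ((m:ℝ) * a 1) ((n:ℝ) * x * a 1)
            linarith
        _ ≤ M + |a 1| := add_le_add hbd hmd
    have hn' : (0:ℝ) < n := by exact_mod_cast hn
    have hmain : (n:ℝ) * |a x - a 1 * x| ≤ M + |a 1| := by
      calc (n:ℝ) * |a x - a 1 * x| = |(n:ℝ) * (a x - a 1 * x)| := by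
            rw [abs_mul, abs_of_pos hn']
        _ = |(n:ℝ) * a x - (n:ℝ) * x * a 1| := by ring_nf
        _ ≤ M + |a 1| := hfull
    rw [le_div_iff₀ hn']
    linarith [hmain]
  -- conclude
  by_contra hne
  have hpos : 0 < |a x - a 1 * x| := abs_pos.mpr (sub_ne_zero.mpr hne)
  obtain ⟨n, hn⟩ := exists_nat_gt ((M + |a 1|) / |a x - a 1 * x|)
  have h0 : 0 ≤ M := le_trans (abs_nonneg _) (hb 0 ⟨le_refl _, zero_le_one⟩)
  have hn0 : 0 < n := by
    rcases Nat.eq_zero_or_pos n with h | h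
    · exfalso
      subst h
      simp only [Nat.cast_zero] at hn
      have := div_nonneg (by positivity : (0:ℝ) ≤ M + |a 1|) (le_of_lt hpos)
      linarith
    · exact h
  have h1 := key n hn0
  have hn' : (0:ℝ) < n := by exact_mod_cast hn0
  rw [div_lt_iff₀ hpos] at hn
  rw [le_div_iff₀ hn'] at h1
  nlinarith

lemma aux_linear_of_continuous (a : ℝ → ℝ) (hadd : ∀ x y, a (x + y) = a x + a y)
    (hc : Continuous a) : ∀ x, a x = a 1 * x := by
  obtain ⟨C, hC⟩ := (isCompact_Icc : IsCompact (Set.Icc (0:ℝ) 1)).exists_bound_of_continuousOn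
    hc.continuousOn
  exact aux_linear_of_bounded a hadd C (fun t ht => hC t ht)

lemma aux_part1 (a : ℝ → ℝ) (hadd : ∀ x y, a (x + y) = a x + a y) (hnc : ¬ Continuous a) :
    (∀ x y : ℝ, |a ((x + y) / 2)| ≤ (|a x| + |a y|) / 2) ∧
    ¬ (∀ x y : ℝ, ∀ t ∈ Set.Icc (0 : ℝ) 1,
        |a (t * x + (1 - t) * y)| + |a ((1 - t) * x + t * y)| ≤ |a x| + |a y|) := by
  have ha0 : a 0 = 0 := (auxHom a hadd).map_zero
  constructor
  · intro x y
    have h2 : a ((x + y) / 2) + a ((x + y) / 2) = a x + a y := by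
      rw [← hadd]
      rw [show (x + y) / 2 + (x + y) / 2 = x + y by ring, hadd]
    have : a ((x + y) / 2) = (a x + a y) / 2 := by linarith
    rw [this, abs_div, abs_two]
    have := abs_add_le (a x) (a y)
    have h2' : (0:ℝ) < 2 := by norm_num
    rw [div_le_div_iff₀ h2' h2']
    nlinarith [abs_add_le (a x) (a y)]
  · intro W
    apply hnc
    have hb : ∀ t ∈ Set.Icc (0:ℝ) 1, |a t| ≤ |a 1| := by
      intro t ht
      have h := W 1 0 t ht
      simp only [mul_one, mul_zero, add_zero, ha0, abs_zero] at h
      linarith [abs_nonneg (a (1 - t))]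
    have hlin := aux_linear_of_bounded a hadd (|a 1|) hb
    have : a = fun x => a 1 * x := funext hlin
    rw [this]
    exact continuous_const.mul continuous_id

/-- There exists a discontinuous additive function. -/
lemma exists_discont_additive :
    ∃ a : ℝ → ℝ, (∀ x y, a (x + y) = a x + a y) ∧ ¬ Continuous a := by
  set b := Module.Basis.ofVectorSpace ℚ ℝ with hb
  have hnt : Nontrivial (Module.Basis.ofVectorSpaceIndex ℚ ℝ) := by
    by_contra h
    rw [not_nontrivial_iff_subsingleton] at h
    have : Countable ((Module.Basis.ofVectorSpaceIndex ℚ ℝ) →₀ ℚ) := inferInstance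
    have : Countable ℝ := Countable.of_equiv _ b.repr.toEquiv.symm
    exact not_countable this
  obtain ⟨i, j, hij⟩ := hnt
  refine ⟨fun x => ((b.repr x) i : ℝ), ?_, ?_⟩
  · intro x y
    dsimp only
    rw [map_add, Finsupp.add_apply]
    push_cast
    ring
  · intro hc
    set a : ℝ → ℝ := fun x => ((b.repr x) i : ℝ) with ha
    have hadd : ∀ x y, a (x + y) = a x + a y := by
      intro x y
      simp only [ha, map_add, Finsupp.add_apply]
      push_cast
      ring
    have hlin := aux_linear_of_continuous a hadd hc
    have hbi : a (b i) = 1 := by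
      simp [ha, Module.Basis.repr_self]
    have hbj : a (b j) = 0 := by
      simp [ha, Module.Basis.repr_self, Finsupp.single_apply, hij.symm]
    have hbj0 : (b j : ℝ) ≠ 0 := b.ne_zero j
    rw [hlin] at hbi hbj
    rcases mul_eq_zero.mp hbj with h | h
    · rw [h, zero_mul] at hbi; exact one_ne_zero hbi.symm
    · exact hbj0 h

theorem stmt15 :
    (∀ a : ℝ → ℝ, (∀ x y, a (x + y) = a x + a y) → ¬ Continuous a →
      ((∀ x y : ℝ, |a ((x + y) / 2)| ≤ (|a x| + |a y|) / 2) ∧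
       ¬ (∀ x y : ℝ, ∀ t ∈ Set.Icc (0 : ℝ) 1,
            |a (t * x + (1 - t) * y)| + |a ((1 - t) * x + t * y)| ≤ |a x| + |a y|))) ∧
    ∃ f : ℝ → ℝ,
      (∀ x y : ℝ, f ((x + y) / 2) ≤ (f x + f y) / 2) ∧
      ¬ (∀ x y : ℝ, ∀ t ∈ Set.Icc (0 : ℝ) 1,
          f (t * x + (1 - t) * y) + f ((1 - t) * x + t * y) ≤ f x + f y) := by
  refine ⟨aux_part1, ?_⟩
  obtain ⟨a, hadd, hnc⟩ := exists_discont_additive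
  obtain ⟨hJ, hW⟩ := aux_part1 a hadd hnc
  exact ⟨fun x => |a x|, hJ, hW⟩
end
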